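/- arXiv:0707.1069 — 2 statements merged into one kernel-verified Lean document; each statement's English description precedes it below -/
import Mathlib

section
/- If G is a finite simple graph with ι(G) > ω(G)/2, then χ(G) ≤ (ω(G) + Δ(G) + 1)/2. -/
open Finset

variable {V : Type*} [Fintype V] [DecidableEq V]

/-- A (proper) coloring of `G`: a partition of the vertex set into nonempty independent sets. -/
def IsColoring (G : SimpleGraph V) (C : Finset (Finset V)) : Prop :=
  (∀ I ∈ C, I.Nonempty) ∧
  (∀ v : V, ∃! I, I ∈ C ∧ v ∈ I) ∧
  (∀ I ∈ C, ∀ v ∈ I, ∀ w ∈ I, ¬ G.Adj v w)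

/-- The frame of a coloring: the multiset of the orders of its color classes. -/
def Frame (C : Finset (Finset V)) : Multiset ℕ :=
  C.val.map Finset.card

/-- The directed edge `(v, w)` is `C`-lonely: `w` lies in a color class `I` not containing `v`
and `N(v) ∩ I = {w}`. -/
def Lonely (G : SimpleGraph V) (C : Finset (Finset V)) (v w : V) : Prop :=
  ∃ I ∈ C, v ∉ I ∧ w ∈ I ∧ ∀ x ∈ I, (G.Adj v x ↔ x = w)

/-- The chromatic number: the minimum number of color classes in a proper coloring. -/
noncomputable def chi (G : SimpleGraph V) : ℕ :=
  sInf {n | ∃ C : Finset (Finset V), IsColoring G C ∧ C.card = n}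

/-- An optimal coloring: a proper coloring with `χ(G)` color classes. -/
def IsOptimalColoring (G : SimpleGraph V) (C : Finset (Finset V)) : Prop :=
  IsColoring G C ∧ C.card = chi G

/-- A (directed) path in the `C`-lonely graph `L_C(G)`, as a nonempty duplicate-free list of
vertices whose consecutive pairs are `C`-lonely edges. -/
def IsLonelyPath (G : SimpleGraph V) (C : Finset (Finset V)) (p : List V) : Prop :=
  p ≠ [] ∧ p.Nodup ∧ List.Chain' (Lonely G C) p

/-- The stinginess `ι(G)`: the maximum number of singleton color classes appearing in an
optimal coloring of `G`. -/
noncomputable def stinginess (G : SimpleGraph V) : ℕ :=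
  sSup {n | ∃ C : Finset (Finset V), IsOptimalColoring G C ∧
    (C.filter fun I => I.card = 1).card = n}

/-- The independence number `α(G)`. -/
noncomputable def indepNum (G : SimpleGraph V) : ℕ :=
  sSup {n | ∃ s : Finset V, (∀ v ∈ s, ∀ w ∈ s, ¬ G.Adj v w) ∧ s.card = n}

/-- An `r`-bounded coloring has all color classes of order at most `r`. -/
def RBounded (r : ℕ) (C : Finset (Finset V)) : Prop :=
  ∀ I ∈ C, I.card ≤ r

/-- `χ_r(G)`: the minimum number of color classes in an `r`-bounded coloring of `G`. -/
noncomputable def chiR (G : SimpleGraph V) (r : ℕ) : ℕ :=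
  sInf {n | ∃ C : Finset (Finset V), IsColoring G C ∧ RBounded r C ∧ C.card = n}

/-- An optimal `r`-bounded coloring. -/
def IsOptimalRBounded (G : SimpleGraph V) (r : ℕ) (C : Finset (Finset V)) : Prop :=
  IsColoring G C ∧ RBounded r C ∧ C.card = chiR G r

/-- `M_r(G)`: the maximum number of order-`r` color classes in an optimal `r`-bounded
coloring of `G`. -/
noncomputable def Mr (G : SimpleGraph V) (r : ℕ) : ℕ :=
  sSup {n | ∃ C : Finset (Finset V), IsOptimalRBounded G r C ∧
    (C.filter fun I => I.card = r).card = n}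

/-- The `r`-bounded stinginess `ι_r(G)`: the maximum number of singleton color classes in an
optimal `r`-bounded coloring of `G`. -/
noncomputable def stinginessR (G : SimpleGraph V) (r : ℕ) : ℕ :=
  sSup {n | ∃ C : Finset (Finset V), IsOptimalRBounded G r C ∧
    (C.filter fun I => I.card = 1).card = n}

/-- `P` is a frame property: membership in `P` only depends on the frame. -/
def IsFrameProperty (G : SimpleGraph V) (P : Finset (Finset V) → Prop) : Prop :=
  ∀ C C' : Finset (Finset V), IsColoring G C → IsColoring G C' →
    Frame C = Frame C' → P C → P C'

/-- `P` is singleton-friendly: `P` is preserved by merging two singleton color classes. -/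
def IsSingletonFriendly (G : SimpleGraph V) (P : Finset (Finset V) → Prop) : Prop :=
  ∀ C : Finset (Finset V), IsColoring G C → ∀ a b : V, a ≠ b → ¬ G.Adj a b →
    ({a} : Finset V) ∈ C → ({b} : Finset V) ∈ C → P C →
      P (insert ({a, b} : Finset V) ((C.erase {a}).erase {b}))

/-- A `P`-optimal coloring: a coloring satisfying `P` with the minimum number of color classes
among colorings satisfying `P`. -/
def IsPOptimal (G : SimpleGraph V) (P : Finset (Finset V) → Prop)
    (C : Finset (Finset V)) : Prop :=
  IsColoring G C ∧ P C ∧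
    ∀ C' : Finset (Finset V), IsColoring G C' → P C' → C.card ≤ C'.card

/-- `Frame_m(C)`: the entries of the frame of `C` that are at least `m`. -/
def FrameGe (m : ℕ) (C : Finset (Finset V)) : Multiset ℕ :=
  (Frame C).filter (fun k => m ≤ k)

/-- The matching number `ν(G)`: the maximum number of edges in a matching of `G`. -/
noncomputable def matchingNumber (G : SimpleGraph V) : ℕ :=
  sSup {n | ∃ M : G.Subgraph, M.IsMatching ∧ M.edgeSet.ncard = n}
/-!
Fix an optimal coloring `C` with `ι(G)` singleton classes and call `w` a lonely neighbour of a
singleton `z` when `w` is the only neighbour of `z` in its class. Since no recoloring of `G` uses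
fewer than `χ(G)` classes, moving `z` into another class shows that `z` sees every other class,
so singletons are pairwise adjacent; moving `z` into the class of a lonely neighbour `w` and `w`
into a singleton class `{v}` shows that `w` sees `v`; and the analogous exchange for two
singletons shows that lonely neighbours of distinct singletons lying in distinct classes are
adjacent.

If the `ℓ` lonely neighbours of some singleton `z` form a clique, then together with `z` they
give `ℓ + 1 ≤ ω`, while `z` has at least two neighbours in each of the other `χ - 1 - ℓ` classes,
so `2 (χ - 1) ≤ ℓ + Δ ≤ ω - 1 + Δ`. Otherwise each singleton `z` has a lonely neighbour `w_z`
that misses another lonely neighbour of `z`; the `w_z` are pairwise adjacent and adjacent to all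
singletons, so with the singletons they form a clique of order `2 ι > ω`, which is absurd.
-/

set_option linter.unusedSectionVars false

namespace IsColoring

variable {G : SimpleGraph V} {C : Finset (Finset V)} {I J : Finset V} {v w z : V}

noncomputable def classOf (hC : IsColoring G C) (v : V) : Finset V :=
  (hC.2.1 v).exists.choose

theorem classOf_mem (hC : IsColoring G C) (v : V) : hC.classOf v ∈ C :=
  (hC.2.1 v).exists.choose_spec.1

theorem mem_classOf (hC : IsColoring G C) (v : V) : v ∈ hC.classOf v :=
  (hC.2.1 v).exists.choose_spec.2

theorem classOf_eq_iff (hC : IsColoring G C) (hI : I ∈ C) : hC.classOf v = I ↔ v ∈ I :=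
  ⟨fun h => h ▸ hC.mem_classOf v,
    fun hv => (hC.2.1 v).unique ⟨hC.classOf_mem v, hC.mem_classOf v⟩ ⟨hI, hv⟩⟩

theorem classOf_eq_singleton_iff (hC : IsColoring G C) (hz : {z} ∈ C) :
    hC.classOf v = {z} ↔ v = z := by
  rw [hC.classOf_eq_iff hz, mem_singleton]

theorem eq_of_mem_of_mem (hC : IsColoring G C) (hI : I ∈ C) (hJ : J ∈ C) (hvI : v ∈ I)
    (hvJ : v ∈ J) : I = J :=
  ((hC.classOf_eq_iff hI).2 hvI).symm.trans ((hC.classOf_eq_iff hJ).2 hvJ)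

theorem not_adj_of_classOf_eq (hC : IsColoring G C) (h : hC.classOf v = hC.classOf w) :
    ¬ G.Adj v w :=
  hC.2.2 _ (hC.classOf_mem v) v (hC.mem_classOf v) w (h ▸ hC.mem_classOf w)

theorem lonely_iff (hC : IsColoring G C) (hI : I ∈ C) (hw : w ∈ I) :
    Lonely G C z w ↔ z ∉ I ∧ ∀ x ∈ I, (G.Adj z x ↔ x = w) := by
  refine ⟨?_, fun ⟨hzI, h⟩ => ⟨I, hI, hzI, hw, h⟩⟩
  rintro ⟨J, hJ, hzJ, hwJ, h⟩
  obtain rfl := hC.eq_of_mem_of_mem hI hJ hw hwJ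
  exact ⟨hzJ, h⟩

theorem eq_of_lonely (hC : IsColoring G C) (hw : Lonely G C z w)
    (hv : hC.classOf v = hC.classOf w) (hzv : G.Adj z v) : v = w :=
  (((hC.lonely_iff (hC.classOf_mem w) (hC.mem_classOf w)).1 hw).2 v (hv ▸ hC.mem_classOf v)).1 hzv

theorem sum_card_filter (hC : IsColoring G C) (p : V → Prop) [DecidablePred p] :
    ∑ I ∈ C, (I.filter p).card = (univ.filter p).card := by
  rw [card_eq_sum_card_fiberwise (f := hC.classOf) (t := C) fun x _ => hC.classOf_mem x]
  refine sum_congr rfl fun I hI => congrArg card ?_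
  ext x
  simp [hC.classOf_eq_iff hI, and_comm]

def recolor (hC : IsColoring G C) (c : V → Finset V) (p : V → Prop)
    (hp : ∀ v, ¬ p v → c v = hC.classOf v) (h : ∀ v, p v → ∀ w, G.Adj v w → c v ≠ c w) :
    G.Coloring (Finset V) :=
  SimpleGraph.Coloring.mk c fun {v w} hvw => by
    by_cases hv : p v
    · exact h v hv w hvw
    by_cases hw : p w
    · exact (h w hw v hvw.symm).symm
    rw [hp v hv, hp w hw]
    exact fun heq => hC.not_adj_of_classOf_eq heq hvw

@[simp]
theorem recolor_apply (hC : IsColoring G C) (c : V → Finset V) (p : V → Prop) (hp) (h) (v : V) :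
    hC.recolor c p hp h v = c v :=
  rfl

end IsColoring

theorem Lonely.adj {G : SimpleGraph V} {C : Finset (Finset V)} {z w : V}
    (h : Lonely G C z w) : G.Adj z w :=
  let ⟨_, _, _, hw, hI⟩ := h
  (hI w hw).2 rfl

open Classical in
noncomputable def lonelyNeighborFinset (G : SimpleGraph V) (C : Finset (Finset V)) (z : V) :
    Finset V :=
  univ.filter (Lonely G C z)

@[simp]
theorem mem_lonelyNeighborFinset {G : SimpleGraph V} {C : Finset (Finset V)} {z w : V} :
    w ∈ lonelyNeighborFinset G C z ↔ Lonely G C z w := by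
  simp [lonelyNeighborFinset]

theorem card_filter_card_eq_one (C : Finset (Finset V)) :
    (C.filter fun I => I.card = 1).card = (univ.filter fun v => {v} ∈ C).card := by
  rw [← card_image_of_injective (univ.filter fun v => {v} ∈ C) singleton_injective]
  refine congrArg card (ext fun I => ?_)
  simp only [mem_filter, mem_image, mem_univ, true_and, card_eq_one]
  constructor
  · rintro ⟨hI, v, rfl⟩
    exact ⟨v, hI, rfl⟩
  · rintro ⟨v, hv, rfl⟩
    exact ⟨hv, v, rfl⟩

section Chi

variable {G : SimpleGraph V} {β : Type*} [DecidableEq β]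

theorem isColoring_fibers (c : G.Coloring β) :
    IsColoring G ((univ.image c).image fun b => univ.filter (c · = b)) := by
  refine ⟨?_, fun v => ⟨univ.filter (c · = c v), ?_, ?_⟩, ?_⟩
  · simp only [mem_image, mem_univ, true_and]
    rintro _ ⟨_, ⟨v, rfl⟩, rfl⟩
    exact ⟨v, by simp⟩
  · simp
  · simp only [mem_image, mem_univ, true_and]
    rintro _ ⟨⟨_, ⟨w, rfl⟩, rfl⟩, hv⟩
    simp_all
  · simp only [mem_image, mem_univ, true_and]
    rintro _ ⟨_, ⟨u, rfl⟩, rfl⟩ v hv w hw hvw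
    simp only [mem_filter, mem_univ, true_and] at hv hw
    exact c.valid hvw (hv.trans hw.symm)

theorem chi_le_card_image (c : G.Coloring β) : chi G ≤ (univ.image c).card :=
  (Nat.sInf_le (s := {n | ∃ C : Finset (Finset V), IsColoring G C ∧ C.card = n})
    ⟨_, isColoring_fibers c, rfl⟩).trans card_image_le

theorem exists_isOptimalColoring (G : SimpleGraph V) : ∃ C, IsOptimalColoring G C :=
  Nat.sInf_mem (s := {n | ∃ C : Finset (Finset V), IsColoring G C ∧ C.card = n})
    ⟨_, _, isColoring_fibers (SimpleGraph.Coloring.mk id G.ne_of_adj), rfl⟩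

theorem exists_isOptimalColoring_card_singletons (G : SimpleGraph V) :
    ∃ C, IsOptimalColoring G C ∧ (C.filter fun I => I.card = 1).card = stinginess G := by
  refine Nat.sSup_mem (s := {n | ∃ C : Finset (Finset V), IsOptimalColoring G C ∧
    (C.filter fun I => I.card = 1).card = n}) ?_ ⟨Fintype.card (Finset V), ?_⟩
  · obtain ⟨C, hC⟩ := exists_isOptimalColoring G
    exact ⟨_, C, hC, rfl⟩
  · rintro _ ⟨C, -, rfl⟩
    exact (card_le_card (filter_subset _ _)).trans (card_le_univ C)

end Chi

namespace IsOptimalColoring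

variable {G : SimpleGraph V} {C : Finset (Finset V)} {I K : Finset V} {u v w w' z z' : V}

theorem isColoring (hC : IsOptimalColoring G C) : IsColoring G C :=
  hC.1

theorem card_eq (hC : IsOptimalColoring G C) : C.card = chi G :=
  hC.2

theorem exists_apply_eq (hC : IsOptimalColoring G C) (c : G.Coloring (Finset V))
    (hcC : ∀ v, c v ∈ C) (hK : K ∈ C) : ∃ v, c v = K := by
  by_contra! hn
  have hsub : univ.image c ⊆ C.erase K := by
    intro I hI
    obtain ⟨v, -, rfl⟩ := mem_image.1 hI
    exact mem_erase.2 ⟨hn v, hcC v⟩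
  have hle := (chi_le_card_image c).trans (card_le_card hsub)
  rw [card_erase_of_mem hK, hC.card_eq] at hle
  have hpos : 0 < chi G := hC.card_eq ▸ card_pos.2 ⟨K, hK⟩
  omega

theorem exists_adj (hC : IsOptimalColoring G C) (hz : {z} ∈ C) (hI : I ∈ C) (hzI : z ∉ I) :
    ∃ w ∈ I, G.Adj z w := by
  by_contra! hn
  have hC' := hC.isColoring
  let c := hC'.recolor (fun x => if x = z then I else hC'.classOf x) (· = z)
    (fun _ hx => if_neg hx) (by
      rintro _ rfl w hzw
      rw [if_pos rfl, if_neg (G.ne_of_adj hzw).symm]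
      exact fun h => hn w ((hC'.classOf_eq_iff hI).1 h.symm) hzw)
  obtain ⟨v, hv⟩ := hC.exists_apply_eq c (fun v => by
    simp only [c, IsColoring.recolor_apply]
    split_ifs <;> simp [hI, hC'.classOf_mem]) hz
  simp only [c, IsColoring.recolor_apply] at hv
  split_ifs at hv with hvz
  · exact hzI (hv ▸ mem_singleton_self z)
  · exact hvz ((hC'.classOf_eq_singleton_iff hz).1 hv)

theorem adj_of_singleton_mem (hC : IsOptimalColoring G C) (hz : {z} ∈ C) (hz' : {z'} ∈ C)
    (hne : z ≠ z') : G.Adj z z' := by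
  obtain ⟨w, hw, hzw⟩ := hC.exists_adj hz hz' (by simpa using hne)
  rwa [mem_singleton.1 hw] at hzw

theorem adj_of_lonely (hC : IsOptimalColoring G C) (hz : {z} ∈ C) (hzw : Lonely G C z w)
    (hv : {v} ∈ C) (hvz : v ≠ z) (hvw : v ≠ w) : G.Adj w v := by
  by_contra hwv
  obtain ⟨I, hI, hzI, hwI, huniq⟩ := hzw
  have hC' := hC.isColoring
  -- `z` moves into `I` and its only neighbour `w` there joins `{v}`
  let c := hC'.recolor (fun x => if x = z then I else if x = w then {v} else hC'.classOf x)
    (fun x => x = z ∨ x = w) (fun x hx => by grind) (by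
      rintro a ha b hab
      have := G.ne_of_adj hab
      have := huniq b
      have := hC'.classOf_eq_iff (v := b) hI
      have := hC'.classOf_eq_singleton_iff (v := b) hv
      rcases ha with rfl | rfl <;> grind)
  obtain ⟨x, hx⟩ := hC.exists_apply_eq c (fun x => by
    simp only [c, IsColoring.recolor_apply]
    split_ifs <;> simp [hI, hv, hC'.classOf_mem]) hz
  have := hC'.classOf_eq_singleton_iff (v := x) hz
  simp only [c, IsColoring.recolor_apply] at hx
  grind [Finset.singleton_inj]

theorem adj_of_lonely_of_lonely (hC : IsOptimalColoring G C) (hz : {z} ∈ C) (hz' : {z'} ∈ C)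
    (hzz' : z ≠ z') {w₁ w₂ : V} (h₁ : Lonely G C z w₁) (h₂ : Lonely G C z' w₂)
    (hcls : hC.isColoring.classOf w₁ ≠ hC.isColoring.classOf w₂) : G.Adj w₁ w₂ := by
  by_cases hw₁ : w₁ = z'
  · exact hw₁ ▸ h₂.adj
  by_cases hw₂ : w₂ = z
  · exact hw₂ ▸ h₁.adj.symm
  by_contra hn
  have hn' : ¬ G.Adj w₂ w₁ := fun h => hn h.symm
  have hC' := hC.isColoring
  obtain ⟨I, hI, hzI, hw₁I, huI⟩ := h₁
  obtain ⟨J, hJ, hz'J, hw₂J, huJ⟩ := h₂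
  have hIJ : I ≠ J := by
    rwa [← (hC'.classOf_eq_iff hI).2 hw₁I, ← (hC'.classOf_eq_iff hJ).2 hw₂J]
  have hz'I : z' ∉ I := fun h => hw₁ (mem_singleton.1 (hC'.eq_of_mem_of_mem hI hz' h
    (mem_singleton_self z') ▸ hw₁I))
  have hzJ : z ∉ J := fun h => hw₂ (mem_singleton.1 (hC'.eq_of_mem_of_mem hJ hz h
    (mem_singleton_self z) ▸ hw₂J))
  -- `z` moves into `I`, `z'` into `J`, and the non-adjacent `w₁, w₂` form the new class `{z}`
  let c := hC'.recolor
    (fun x => if x = z then I else if x = z' then J else if x = w₁ ∨ x = w₂ then {z}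
      else hC'.classOf x)
    (fun x => x = z ∨ x = z' ∨ x = w₁ ∨ x = w₂) (fun x hx => by grind) (by
      rintro a ha b hab
      have := G.ne_of_adj hab
      have := huI b
      have := huJ b
      have := hC'.classOf_eq_iff (v := b) hI
      have := hC'.classOf_eq_iff (v := b) hJ
      have := hC'.classOf_eq_singleton_iff (v := b) hz
      rcases ha with rfl | rfl | rfl | rfl <;> grind)
  obtain ⟨x, hx⟩ := hC.exists_apply_eq c (fun x => by
    simp only [c, IsColoring.recolor_apply]
    split_ifs <;> simp [hI, hJ, hz, hC'.classOf_mem]) hz'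
  have := hC'.classOf_eq_singleton_iff (v := x) hz'
  simp only [c, IsColoring.recolor_apply] at hx
  grind [Finset.singleton_inj]

theorem two_le_card_filter_adj_add_card_filter_lonely (hC : IsOptimalColoring G C)
    [DecidableRel G.Adj] [DecidablePred (Lonely G C z)] (hz : {z} ∈ C) (hI : I ∈ C)
    (hzI : z ∉ I) : 2 ≤ (I.filter (G.Adj z)).card + (I.filter (Lonely G C z)).card := by
  obtain ⟨w, hwI, hzw⟩ := hC.exists_adj hz hI hzI
  have hw : w ∈ I.filter (G.Adj z) := mem_filter.2 ⟨hwI, hzw⟩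
  by_cases hw' : ∃ w' ∈ I, G.Adj z w' ∧ w' ≠ w
  · obtain ⟨w', hw'I, hzw', hne⟩ := hw'
    have := one_lt_card.2 ⟨w', mem_filter.2 ⟨hw'I, hzw'⟩, w, hw, hne⟩
    omega
  · push Not at hw'
    have hlonely : Lonely G C z w :=
      (hC.isColoring.lonely_iff hI hwI).2 ⟨hzI, fun x hx => ⟨hw' x hx, fun h => h ▸ hzw⟩⟩
    have := card_pos.2 ⟨w, hw⟩
    have := card_pos.2 ⟨w, mem_filter.2 ⟨hwI, hlonely⟩⟩
    omega

theorem two_mul_card_sub_one_le [DecidableRel G.Adj] (hC : IsOptimalColoring G C)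
    (hz : {z} ∈ C) : 2 * (C.card - 1) ≤ (lonelyNeighborFinset G C z).card + G.degree z := by
  classical
  have hpt : ∀ I ∈ C.erase {z},
      2 ≤ (I.filter (G.Adj z)).card + (I.filter (Lonely G C z)).card := fun I hI => by
    obtain ⟨hIz, hI⟩ := mem_erase.1 hI
    refine hC.two_le_card_filter_adj_add_card_filter_lonely hz hI fun hzI => hIz ?_
    exact hC.isColoring.eq_of_mem_of_mem hI hz hzI (mem_singleton_self z)
  calc 2 * (C.card - 1) = (C.erase {z}).card • 2 := by
        rw [card_erase_of_mem hz, smul_eq_mul, mul_comm]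
    _ ≤ ∑ I ∈ C.erase {z}, ((I.filter (G.Adj z)).card + (I.filter (Lonely G C z)).card) :=
        card_nsmul_le_sum _ _ _ hpt
    _ ≤ ∑ I ∈ C, ((I.filter (G.Adj z)).card + (I.filter (Lonely G C z)).card) :=
        sum_le_sum_of_subset (erase_subset _ _)
    _ = (lonelyNeighborFinset G C z).card + G.degree z := by
        rw [sum_add_distrib, hC.isColoring.sum_card_filter, hC.isColoring.sum_card_filter,
          ← G.card_neighborFinset_eq_degree, G.neighborFinset_eq_filter, add_comm]
        rfl

theorem two_mul_card_le_of_isClique [DecidableRel G.Adj] (hC : IsOptimalColoring G C)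
    (hz : {z} ∈ C) (hL : G.IsClique (lonelyNeighborFinset G C z : Set V)) :
    2 * C.card ≤ G.cliqueNum + G.maxDegree + 1 := by
  have hzL : z ∉ lonelyNeighborFinset G C z := fun h =>
    G.loopless.irrefl z (mem_lonelyNeighborFinset.1 h).adj
  have hclique : G.IsClique (insert z (lonelyNeighborFinset G C z) : Finset V) := by
    rw [coe_insert]
    exact hL.insert fun w hw _ => (mem_lonelyNeighborFinset.1 hw).adj
  have hω := hclique.card_le_cliqueNum
  rw [card_insert_of_notMem hzL] at hω
  have hdeg := hC.two_mul_card_sub_one_le hz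
  have hΔ := G.degree_le_maxDegree z
  have hpos : 0 < C.card := card_pos.2 ⟨_, hz⟩
  omega

theorem adj_of_lonely_of_not_adj (hC : IsOptimalColoring G C) (hz : {z} ∈ C)
    (hw : Lonely G C z w) (hw' : Lonely G C z w') (hne : w ≠ w') (hn : ¬ G.Adj w w')
    (hv : {v} ∈ C) : G.Adj w v := by
  by_cases hvz : v = z
  · exact hvz ▸ hw.adj.symm
  by_cases hvw : v = w
  · exact absurd (hvw ▸ hC.adj_of_lonely hz hw' hv hvz (hvw ▸ hne)).symm hn
  · exact hC.adj_of_lonely hz hw hv hvz hvw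

theorem adj_of_lonely_of_lonely_of_not_adj (hC : IsOptimalColoring G C) (hz : {z} ∈ C)
    (hz' : {z'} ∈ C) (hzz' : z ≠ z') (hw : Lonely G C z w) (hw' : Lonely G C z w')
    (hne : w ≠ w') (hn : ¬ G.Adj w w') (hu : Lonely G C z' u) (hzu : G.Adj z u) :
    G.Adj w u := by
  have hC' := hC.isColoring
  refine hC.adj_of_lonely_of_lonely hz hz' hzz' hw hu fun hcls => ?_
  obtain rfl := hC'.eq_of_lonely hw hcls.symm hzu
  have hcls' : hC'.classOf u ≠ hC'.classOf w' := fun h => hne (hC'.eq_of_lonely hw' h hw.adj)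
  exact hn (hC.adj_of_lonely_of_lonely hz' hz hzz'.symm hu hw' hcls')

theorem two_mul_card_singletons_le_cliqueNum (hC : IsOptimalColoring G C)
    (hL : ∀ z, {z} ∈ C → ¬ G.IsClique (lonelyNeighborFinset G C z : Set V)) :
    2 * (univ.filter fun v => {v} ∈ C).card ≤ G.cliqueNum := by
  set S := univ.filter fun v => {v} ∈ C
  have hS : ∀ {v}, v ∈ S ↔ {v} ∈ C := by simp [S]
  have hbad : ∀ z ∈ S, ∃ w w', Lonely G C z w ∧ Lonely G C z w' ∧ w ≠ w' ∧ ¬ G.Adj w w' := by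
    intro z hz
    have := hL z (hS.1 hz)
    simp only [SimpleGraph.IsClique, Set.Pairwise, mem_coe, mem_lonelyNeighborFinset] at this
    push Not at this
    obtain ⟨w, hw, w', hw', hne, hn⟩ := this
    exact ⟨w, w', hw, hw', hne, hn⟩
  choose! g g' hg hg' hne hn using hbad
  have hgS : ∀ z ∈ S, ∀ v ∈ S, G.Adj (g z) v := fun z hz v hv =>
    hC.adj_of_lonely_of_not_adj (hS.1 hz) (hg z hz) (hg' z hz) (hne z hz) (hn z hz) (hS.1 hv)
  have hgg : ∀ z ∈ S, ∀ z' ∈ S, z ≠ z' → G.Adj (g z) (g z') := fun z hz z' hz' hzz' =>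
    hC.adj_of_lonely_of_lonely_of_not_adj (hS.1 hz) (hS.1 hz') hzz' (hg z hz) (hg' z hz)
      (hne z hz) (hn z hz) (hg z' hz') (hgS z' hz' z hz).symm
  have hdisj : Disjoint S (S.image g) := by
    refine disjoint_left.2 fun v hv hvg => ?_
    obtain ⟨z, hz, rfl⟩ := mem_image.1 hvg
    exact G.loopless.irrefl _ (hgS z hz _ hv)
  have hinj : Set.InjOn g S := fun z hz z' hz' hgz => by
    by_contra hzz'
    exact G.loopless.irrefl _ (hgz ▸ hgg z hz z' hz' hzz')
  have hclique : G.IsClique ((S ∪ S.image g : Finset V) : Set V) := by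
    intro x hx y hy hxy
    simp only [coe_union, coe_image, Set.mem_union, Set.mem_image, mem_coe] at hx hy
    rcases hx with hx | ⟨z, hz, rfl⟩ <;> rcases hy with hy | ⟨z', hz', rfl⟩
    · exact hC.adj_of_singleton_mem (hS.1 hx) (hS.1 hy) hxy
    · exact (hgS z' hz' x hx).symm
    · exact hgS z hz y hy
    · exact hgg z hz z' hz' fun h => hxy (h ▸ rfl)
  have hω := hclique.card_le_cliqueNum
  rw [card_union_of_disjoint hdisj, card_image_of_injOn hinj] at hω
  omega

end IsOptimalColoring

theorem statement_4 (G : SimpleGraph V) [DecidableRel G.Adj]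
    (h : (G.cliqueNum : ℝ) / 2 < (stinginess G : ℝ)) :
    (chi G : ℝ) ≤ ((G.cliqueNum : ℝ) + G.maxDegree + 1) / 2 := by
  obtain ⟨C, hC, hcard⟩ := exists_isOptimalColoring_card_singletons G
  rw [card_filter_card_eq_one] at hcard
  by_cases hL : ∃ z, {z} ∈ C ∧ G.IsClique (lonelyNeighborFinset G C z : Set V)
  · obtain ⟨z, hz, hL⟩ := hL
    have := hC.two_mul_card_le_of_isClique hz hL
    rw [hC.card_eq] at this
    have : (2 * chi G : ℝ) ≤ G.cliqueNum + G.maxDegree + 1 := by exact_mod_cast this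
    linarith
  · push Not at hL
    have := hC.two_mul_card_singletons_le_cliqueNum hL
    rw [hcard] at this
    have : (2 * stinginess G : ℝ) ≤ G.cliqueNum := by exact_mod_cast this
    linarith
end

section
/- For any finite simple graph G, at least one of the following holds: (1) χ(G) ≤ (ω(G) + Δ(G) + 1)/2, or (2) χ(G) ≤ (ω(G)/2 + |G| − α(G))/2 + 1. -/
open Finset

variable {V : Type*} [Fintype V] [DecidableEq V]

/-!
Assume `2χ ≥ ω + Δ + 2`. Then every coloring `D` has at most `ω/2 + 2(|D| - χ)` singleton
classes, by induction on `|D|`. If `D` had more, merging two singleton classes, or moving a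
singleton vertex into a class it does not see, would produce a coloring with one class fewer and
too many singletons; so the singleton vertices form a clique and see every other class. Counting
degrees, each singleton vertex `v` then has many lonely classes: classes `I` of order at least two
with `N(v) ∩ I = {w}`. Exchanging `v` and `w` keeps the number of classes and of singletons, so `w`
joins the clique; Hall's theorem provides enough distinct such `w` to exceed `ω`.

For the second bound take a maximum independent set `A` and an optimal coloring. At most one class
lies inside `A`. Gathering the vertices of `A` from the classes with at most one vertex outside `A`
gives a coloring with at most `χ + 1` classes and a singleton for each class with exactly one
vertex outside `A`, so the singleton bound limits those classes; all other classes have two vertices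
outside `A`, and counting the vertices outside `A` gives `4χ ≤ ω + 2(|G| - α) + 4`.
-/
set_option linter.unusedSectionVars false

section Coloring

variable {G : SimpleGraph V} {C R R' : Finset (Finset V)} {I J : Finset V}

def numSingletons (C : Finset (Finset V)) : ℕ :=
  (C.filter fun I => I.card = 1).card

theorem isColoring_of_disjoint (hne : ∀ I ∈ C, I.Nonempty) (hcover : ∀ v : V, ∃ I ∈ C, v ∈ I)
    (hdisj : ∀ I ∈ C, ∀ J ∈ C, I ≠ J → Disjoint I J)
    (hind : ∀ I ∈ C, ∀ v ∈ I, ∀ w ∈ I, ¬ G.Adj v w) : IsColoring G C := by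
  refine ⟨hne, fun v => ?_, hind⟩
  obtain ⟨I, hI, hvI⟩ := hcover v
  refine ⟨I, ⟨hI, hvI⟩, fun J ⟨hJ, hvJ⟩ => ?_⟩
  by_contra hJI
  exact Finset.disjoint_left.mp (hdisj J hJ I hI hJI) hvJ hvI

namespace IsColoring

theorem eq_of_mem (hC : IsColoring G C) (hI : I ∈ C) (hJ : J ∈ C) {v : V} (hvI : v ∈ I)
    (hvJ : v ∈ J) : I = J :=
  (hC.2.1 v).unique ⟨hI, hvI⟩ ⟨hJ, hvJ⟩

theorem exists_mem (hC : IsColoring G C) (v : V) : ∃ I ∈ C, v ∈ I :=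
  (hC.2.1 v).exists

theorem disjoint (hC : IsColoring G C) (hI : I ∈ C) (hJ : J ∈ C) (hIJ : I ≠ J) :
    Disjoint I J :=
  Finset.disjoint_left.mpr fun _ hvI hvJ => hIJ (hC.eq_of_mem hI hJ hvI hvJ)

theorem sum_card_inter (hC : IsColoring G C) (s : Finset V) :
    ∑ I ∈ C, (s ∩ I).card = s.card := by
  rw [← card_biUnion]
  · congr 1
    ext v
    obtain ⟨I, hI, hvI⟩ := hC.exists_mem v
    simp only [mem_biUnion, mem_inter]
    exact ⟨fun ⟨_, _, hv, _⟩ => hv, fun hv => ⟨I, hI, hv, hvI⟩⟩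
  · intro I hI J hJ hIJ
    exact (hC.disjoint hI hJ hIJ).mono inter_subset_right inter_subset_right

theorem disjoint_of_mem_sdiff (hC : IsColoring G C) (hR : R ⊆ C) {K L : Finset V}
    (hK : K ∈ C \ R) (hL : L ⊆ R.biUnion id) : Disjoint K L := by
  refine Finset.disjoint_left.mpr fun v hvK hvL => ?_
  obtain ⟨J, hJ, hvJ⟩ := mem_biUnion.mp (hL hvL)
  exact (mem_sdiff.mp hK).2 (hC.eq_of_mem (mem_sdiff.mp hK).1 (hR hJ) hvK hvJ ▸ hJ)

theorem disjoint_sdiff_of_biUnion_subset (hC : IsColoring G C) (hR : R ⊆ C)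
    (hne : ∀ K ∈ R', K.Nonempty) (hsub : R'.biUnion id ⊆ R.biUnion id) :
    Disjoint (C \ R) R' := by
  refine Finset.disjoint_left.mpr fun K hK hK' => ?_
  have hKK := hC.disjoint_of_mem_sdiff hR hK ((subset_biUnion_of_mem id hK').trans hsub)
  exact (hne K hK').ne_empty (disjoint_self_iff_empty K |>.mp hKK)

theorem sdiff_union (hC : IsColoring G C) (hR : R ⊆ C)
    (hne : ∀ K ∈ R', K.Nonempty) (hind : ∀ K ∈ R', ∀ v ∈ K, ∀ w ∈ K, ¬ G.Adj v w)
    (hdisj : ∀ K ∈ R', ∀ L ∈ R', K ≠ L → Disjoint K L) (hcover : R'.biUnion id = R.biUnion id) :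
    IsColoring G (C \ R ∪ R') := by
  refine isColoring_of_disjoint ?_ ?_ ?_ ?_
  · intro K hK
    rcases mem_union.mp hK with hK | hK
    exacts [hC.1 K (mem_sdiff.mp hK).1, hne K hK]
  · intro v
    obtain ⟨I, hI, hvI⟩ := hC.exists_mem v
    by_cases hIR : I ∈ R
    · obtain ⟨K, hK, hvK⟩ := mem_biUnion.mp (hcover ▸ mem_biUnion.mpr ⟨I, hIR, hvI⟩)
      exact ⟨K, mem_union_right _ hK, hvK⟩
    · exact ⟨I, mem_union_left _ (mem_sdiff.mpr ⟨hI, hIR⟩), hvI⟩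
  · have hout (K) (hK : K ∈ C \ R) (L) (hL : L ∈ R') : Disjoint K L :=
      hC.disjoint_of_mem_sdiff hR hK (hcover ▸ subset_biUnion_of_mem id hL)
    intro K hK L hL hKL
    rcases mem_union.mp hK with hK | hK <;> rcases mem_union.mp hL with hL | hL
    · exact hC.disjoint (mem_sdiff.mp hK).1 (mem_sdiff.mp hL).1 hKL
    · exact hout K hK L hL
    · exact (hout L hL K hK).symm
    · exact hdisj K hK L hL hKL
  · intro K hK
    rcases mem_union.mp hK with hK | hK
    exacts [hC.2.2 K (mem_sdiff.mp hK).1, hind K hK]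

end IsColoring

theorem chi_le_card (hC : IsColoring G C) : chi G ≤ C.card :=
  Nat.sInf_le ⟨C, hC, rfl⟩

theorem isColoring_image_singleton (G : SimpleGraph V) :
    IsColoring G (univ.image fun v => ({v} : Finset V)) := by
  refine isColoring_of_disjoint ?_ ?_ ?_ ?_ <;> simp [eq_comm]

theorem exists_isColoring_card_eq_chi (G : SimpleGraph V) :
    ∃ C, IsColoring G C ∧ C.card = chi G :=
  Nat.sInf_mem (s := {n | ∃ C, IsColoring G C ∧ C.card = n})
    ⟨_, _, isColoring_image_singleton G, rfl⟩

end Coloring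

theorem Finset.card_sdiff_union_add_card {α : Type*} [DecidableEq α] {s t u : Finset α}
    (hts : t ⊆ s) (hu : Disjoint (s \ t) u) : (s \ t ∪ u).card + t.card = s.card + u.card := by
  rw [card_union_of_disjoint hu, add_right_comm, card_sdiff_add_card_eq_card hts]

theorem numSingletons_sdiff_union_add {C R R' : Finset (Finset V)} (hR : R ⊆ C)
    (h : Disjoint (C \ R) R') :
    numSingletons (C \ R ∪ R') + numSingletons R = numSingletons C + numSingletons R' := by
  have hfilter : (C \ R).filter (fun I => I.card = 1) =
      C.filter (fun I => I.card = 1) \ R.filter (fun I => I.card = 1) := by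
    ext; simp only [mem_filter, mem_sdiff]; tauto
  unfold numSingletons
  rw [filter_union, hfilter]
  exact card_sdiff_union_add_card (filter_subset_filter _ hR)
    (hfilter ▸ disjoint_filter_filter h)

section Operations

variable {G : SimpleGraph V} {C R R' : Finset (Finset V)} {I J : Finset V}

theorem IsColoring.exists_replace (hC : IsColoring G C) (hR : R ⊆ C)
    (hne : ∀ K ∈ R', K.Nonempty) (hind : ∀ K ∈ R', ∀ v ∈ K, ∀ w ∈ K, ¬ G.Adj v w)
    (hdisj : ∀ K ∈ R', ∀ L ∈ R', K ≠ L → Disjoint K L) (hcover : R'.biUnion id = R.biUnion id) :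
    ∃ C', IsColoring G C' ∧ C'.card + R.card = C.card + R'.card ∧
      numSingletons C' + numSingletons R = numSingletons C + numSingletons R' ∧
      R' ⊆ C' ∧ ∀ K ∈ C, K ∉ R → K ∈ C' := by
  have hCR := hC.disjoint_sdiff_of_biUnion_subset hR hne hcover.le
  exact ⟨_, hC.sdiff_union hR hne hind hdisj hcover, card_sdiff_union_add_card hR hCR,
    numSingletons_sdiff_union_add hR hCR, subset_union_right,
    fun K hK hKR => mem_union_left _ (mem_sdiff.mpr ⟨hK, hKR⟩)⟩

theorem forall_not_adj_insert {K : Finset V} {v : V} (hK : ∀ x ∈ K, ∀ y ∈ K, ¬ G.Adj x y)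
    (hv : ∀ x ∈ K, ¬ G.Adj v x) : ∀ x ∈ insert v K, ∀ y ∈ insert v K, ¬ G.Adj x y := by
  simp only [mem_insert]
  rintro x (rfl | hx) y (rfl | hy)
  exacts [G.irrefl, hv y hy, fun h => hv x hx h.symm, hK x hx y hy]

theorem numSingletons_pair_of_two_le_card (v : V) (hI : 2 ≤ I.card) :
    numSingletons {{v}, I} = 1 := by
  have : I.card ≠ 1 := by omega
  simp [numSingletons, filter_insert, filter_singleton, this]

theorem IsColoring.exists_merge (hC : IsColoring G C) (hI : I ∈ C) (hJ : J ∈ C) (hIJ : I ≠ J)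
    (hind : ∀ v ∈ I ∪ J, ∀ w ∈ I ∪ J, ¬ G.Adj v w) :
    ∃ C', IsColoring G C' ∧ C'.card + 1 = C.card ∧
      numSingletons C ≤ numSingletons C' + numSingletons {I, J} := by
  obtain ⟨C', hC', hcard, hsing, -, -⟩ := hC.exists_replace (R' := {I ∪ J})
    (insert_subset hI (singleton_subset_iff.mpr hJ))
    (by simpa using (hC.1 I hI).mono subset_union_left) (by simpa using hind) (by simp) (by simp)
  rw [card_pair hIJ, card_singleton] at hcard
  exact ⟨C', hC', by omega, by omega⟩

theorem IsColoring.exists_swap [DecidableRel G.Adj] (hC : IsColoring G C) {v w : V}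
    (hv : {v} ∈ C) (hI : I ∈ C) (hI2 : 2 ≤ I.card) (hw : G.neighborFinset v ∩ I = {w}) :
    ∃ C', IsColoring G C' ∧ C'.card = C.card ∧ numSingletons C ≤ numSingletons C' ∧
      {w} ∈ C' ∧ ∀ K ∈ C, K ≠ {v} → K ≠ I → K ∈ C' := by
  have hvI : {v} ≠ I := by rintro rfl; simp at hI2
  have hvI' : v ∉ I := disjoint_singleton_left.mp (hC.disjoint hv hI hvI)
  have hmem (x : V) : x ∈ G.neighborFinset v ∩ I ↔ x = w := by rw [hw, mem_singleton]
  have hwI : w ∈ I := (mem_inter.mp ((hmem w).mpr rfl)).2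
  have hwv : w ≠ v := by rintro rfl; exact hvI' hwI
  set I' := insert v (I.erase w)
  have hI' : ∀ x ∈ I', ∀ y ∈ I', ¬ G.Adj x y :=
    forall_not_adj_insert
      (fun x hx y hy => hC.2.2 I hI x (mem_of_mem_erase hx) y (mem_of_mem_erase hy))
      fun x hx hvx => ne_of_mem_erase hx <| (hmem x).mp <|
        mem_inter.mpr ⟨(G.mem_neighborFinset v x).mpr hvx, mem_of_mem_erase hx⟩
  have hwI' : Disjoint {w} I' := by simp [I', hwv]
  have hdisj : ∀ K ∈ ({{w}, I'} : Finset (Finset V)), ∀ L ∈ ({{w}, I'} : Finset _), K ≠ L →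
      Disjoint K L := by
    simp only [mem_insert, mem_singleton]
    rintro K (rfl | rfl) L (rfl | rfl) hKL
    exacts [absurd rfl hKL, hwI', hwI'.symm, absurd rfl hKL]
  have hcover : ({{w}, I'} : Finset (Finset V)).biUnion id = ({{v}, I} : Finset _).biUnion id := by
    ext x
    by_cases hxw : x = w
    · simp [hxw, hwI]
    · simp [I', hxw]
  obtain ⟨C', hC', hcard, hsing, hR'C', hkeep⟩ := hC.exists_replace
    (insert_subset hv (singleton_subset_iff.mpr hI)) (by simp [I']) (by simpa using hI') hdisj
    hcover
  rw [card_pair hvI, card_pair (hwI'.ne (singleton_nonempty w).ne_empty)] at hcard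
  rw [numSingletons_pair_of_two_le_card v hI2] at hsing
  have hw1 : 1 ≤ numSingletons {{w}, I'} :=
    card_pos.mpr ⟨{w}, mem_filter.mpr ⟨mem_insert_self _ _, card_singleton w⟩⟩
  exact ⟨C', hC', by omega, by omega, hR'C' (mem_insert_self _ _),
    fun K hK hKv hKI => hkeep K hK (by simp [hKv, hKI])⟩

end Operations

section Saturated

variable {G : SimpleGraph V} {n S : ℕ} {E : Finset (Finset V)} {I J : Finset V}

theorem adj_of_singleton_mem
    (hsparse : ∀ D, IsColoring G D → D.card + 1 = n → numSingletons D + 2 < S)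
    (hE : IsColoring G E) (hn : E.card = n) (hS : S ≤ numSingletons E) {a b : V}
    (ha : {a} ∈ E) (hb : {b} ∈ E) (hab : a ≠ b) : G.Adj a b := by
  by_contra hnadj
  have hind := forall_not_adj_insert (G := G) (K := {b}) (by simp) (by simpa using hnadj)
  rw [insert_eq] at hind
  obtain ⟨E', hE', hcard, hsing⟩ := hE.exists_merge ha hb (by simpa using hab) hind
  have hpair : numSingletons {{a}, {b}} ≤ 2 := (card_filter_le _ _).trans card_le_two
  have := hsparse E' hE' (by omega)
  omega

theorem exists_adj_of_singleton_mem
    (hsparse : ∀ D, IsColoring G D → D.card + 1 = n → numSingletons D + 2 < S)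
    (hE : IsColoring G E) (hn : E.card = n) (hS : S ≤ numSingletons E) {v : V}
    (hv : {v} ∈ E) (hI : I ∈ E) (hI2 : 2 ≤ I.card) : ∃ x ∈ I, G.Adj v x := by
  by_contra! hnadj
  have hvI : {v} ≠ I := by rintro rfl; simp at hI2
  have hind := forall_not_adj_insert (hE.2.2 I hI) hnadj
  rw [insert_eq] at hind
  obtain ⟨E', hE', hcard, hsing⟩ := hE.exists_merge hv hI hvI hind
  rw [numSingletons_pair_of_two_le_card v hI2] at hsing
  have := hsparse E' hE' (by omega)
  omega

variable [DecidableRel G.Adj]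

theorem adj_of_inter_neighborFinset_eq
    (hsparse : ∀ D, IsColoring G D → D.card + 1 = n → numSingletons D + 2 < S)
    (hE : IsColoring G E) (hn : E.card = n) (hS : S ≤ numSingletons E) {x w a : V}
    (hx : {x} ∈ E) (hI : I ∈ E) (hI2 : 2 ≤ I.card) (hw : G.neighborFinset x ∩ I = {w})
    (ha : {a} ∈ E) (hax : a ≠ x) : G.Adj a w := by
  have haI : {a} ≠ I := by rintro rfl; simp at hI2
  have hwI := (mem_inter.mp (eq_singleton_iff_unique_mem.mp hw).1).2
  obtain ⟨E', hE', hcard, hsing, hwE', hkeep⟩ := hE.exists_swap hx hI hI2 hw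
  refine adj_of_singleton_mem hsparse hE' (hcard.trans hn) (hS.trans hsing)
    (hkeep _ ha (by simpa using hax) haI) hwE' ?_
  rintro rfl
  exact haI (hE.eq_of_mem ha hI (mem_singleton_self a) hwI)

theorem adj_of_inter_neighborFinset_eq_of_inter_neighborFinset_eq
    (hsparse : ∀ D, IsColoring G D → D.card + 1 = n → numSingletons D + 2 < S)
    (hE : IsColoring G E) (hn : E.card = n) (hS : S ≤ numSingletons E) {x y w w' : V}
    (hx : {x} ∈ E) (hy : {y} ∈ E) (hxy : x ≠ y) (hI : I ∈ E) (hI2 : 2 ≤ I.card)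
    (hw : G.neighborFinset x ∩ I = {w}) (hJ : J ∈ E) (hJ2 : 2 ≤ J.card)
    (hw' : G.neighborFinset y ∩ J = {w'}) (hIJ : I ≠ J) : G.Adj w w' := by
  have hyI : {y} ≠ I := by rintro rfl; simp at hI2
  have hwJ : {w} ≠ J := by rintro rfl; simp at hJ2
  have hwI := (mem_inter.mp (eq_singleton_iff_unique_mem.mp hw).1).2
  have hw'J := (mem_inter.mp (eq_singleton_iff_unique_mem.mp hw').1).2
  obtain ⟨E', hE', hcard', hsing', hwE', hkeep'⟩ := hE.exists_swap hx hI hI2 hw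
  have hyE' := hkeep' _ hy (by simpa using hxy.symm) hyI
  have hJE' := hkeep' _ hJ (by rintro rfl; simp at hJ2) hIJ.symm
  obtain ⟨E'', hE'', hcard'', hsing'', hw'E'', hkeep''⟩ := hE'.exists_swap hyE' hJE' hJ2 hw'
  have hwy : ({w} : Finset V) ≠ {y} := by
    rw [Ne, singleton_inj]
    rintro rfl
    exact hyI (hE.eq_of_mem hy hI (mem_singleton_self w) hwI)
  refine adj_of_singleton_mem hsparse hE'' (hcard''.trans (hcard'.trans hn))
    ((hS.trans hsing').trans hsing'') (hkeep'' _ hwE' hwy hwJ) hw'E'' ?_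
  rintro rfl
  exact hIJ (hE.eq_of_mem hI hJ hwI hw'J)

end Saturated

section Lonely

variable {G : SimpleGraph V} [DecidableRel G.Adj] {D : Finset (Finset V)}

/-- The classes `I` with `2 ≤ |I|` containing some `w` for which `(v, w)` is `D`-lonely. -/
def lonelyClasses (G : SimpleGraph V) [DecidableRel G.Adj] (D : Finset (Finset V)) (v : V) :
    Finset (Finset V) :=
  D.filter fun I => 2 ≤ I.card ∧ (G.neighborFinset v ∩ I).card = 1

theorem two_mul_card_le_degree_add (hD : IsColoring G D) {v : V} (hv : {v} ∈ D)
    (hsing : ∀ u, {u} ∈ D → u ≠ v → G.Adj v u)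
    (hbig : ∀ I ∈ D, 2 ≤ I.card → ∃ x ∈ I, G.Adj v x) :
    2 * D.card ≤ G.degree v + numSingletons D + (lonelyClasses G D v).card + 1 := by
  -- a class `I ≠ {v}` meets `N(v)`, and in two vertices unless `I` is a singleton or lonely
  have hclass : ∀ I ∈ D, 2 ≤ (G.neighborFinset v ∩ I).card + (if I.card = 1 then 1 else 0) +
      (if 2 ≤ I.card ∧ (G.neighborFinset v ∩ I).card = 1 then 1 else 0) +
      (if {v} = I then 1 else 0) := by
    intro I hI
    by_cases hIv : {v} = I
    · subst hIv
      simp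
    obtain hI1 | hI2 : I.card = 1 ∨ 2 ≤ I.card := by
      have := (hD.1 I hI).card_pos
      omega
    · obtain ⟨u, rfl⟩ := card_eq_one.mp hI1
      have hu : u ≠ v := by rintro rfl; exact hIv rfl
      have : (G.neighborFinset v ∩ {u}).card = 1 := by
        simp [(G.mem_neighborFinset v u).mpr (hsing u hI hu)]
      simp [this]
    · obtain ⟨x, hxI, hvx⟩ := hbig I hI hI2
      have : 1 ≤ (G.neighborFinset v ∩ I).card :=
        card_pos.mpr ⟨x, mem_inter.mpr ⟨(G.mem_neighborFinset v x).mpr hvx, hxI⟩⟩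
      split_ifs <;> omega
  calc 2 * D.card = ∑ I ∈ D, 2 := by rw [sum_const, smul_eq_mul, mul_comm]
    _ ≤ _ := sum_le_sum hclass
    _ = _ := by
      simp only [sum_add_distrib, hD.sum_card_inter, ← card_filter, sum_ite_eq, if_pos hv,
        G.card_neighborFinset_eq_degree, numSingletons, lonelyClasses]

end Lonely

theorem Finset.exists_injective_mem_of_card_le {α β : Type*} [DecidableEq β] (s : Finset α)
    (t : α → Finset β) (h : ∀ a ∈ s, s.card ≤ (t a).card) :
    ∃ f : s → β, Function.Injective f ∧ ∀ a : s, f a ∈ t a := by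
  refine (all_card_le_biUnion_card_iff_exists_injective _).mp fun u => ?_
  obtain rfl | ⟨a, ha⟩ := u.eq_empty_or_nonempty
  · simp
  calc u.card ≤ s.card := by simpa using card_le_univ u
    _ ≤ (t a).card := h a a.2
    _ ≤ _ := card_le_card (subset_biUnion_of_mem (fun b : s => t b) ha)

theorem card_filter_singleton_mem (D : Finset (Finset V)) :
    (univ.filter fun u => {u} ∈ D).card = numSingletons D := by
  rw [numSingletons, ← card_image_of_injective _ singleton_injective]
  congr 1
  ext I
  simp only [mem_image, mem_filter, mem_univ, true_and, card_eq_one]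
  constructor
  · rintro ⟨u, hu, rfl⟩
    exact ⟨hu, u, rfl⟩
  · rintro ⟨hI, u, rfl⟩
    exact ⟨u, hI, rfl⟩

section Clique

variable {G : SimpleGraph V} [DecidableRel G.Adj] {D : Finset (Finset V)}

theorem isClique_filter_singleton_mem_union_image
    (hsparse : ∀ D', IsColoring G D' → D'.card + 1 = D.card →
      numSingletons D' + 2 < numSingletons D)
    (hD : IsColoring G D) {P : Finset V} (hP : ∀ a : P, {a.1} ∈ D) {f : P → Finset V}
    (hf : Function.Injective f) (hfD : ∀ a, f a ∈ D) (hf2 : ∀ a, 2 ≤ (f a).card) {w : P → V}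
    (hw : ∀ a : P, G.neighborFinset a ∩ f a = {w a}) :
    G.IsClique (((univ.filter fun u => {u} ∈ D) ∪ univ.image w : Finset V) : Set V) := by
  have := G.symm
  rw [SimpleGraph.isClique_iff, coe_union, Set.pairwise_union_of_symm]
  simp only [coe_filter, mem_univ, true_and, coe_image, coe_univ, Set.image_univ]
  refine ⟨fun a ha b hb hab => ?_, ?_, ?_⟩
  · exact adj_of_singleton_mem hsparse hD rfl le_rfl ha hb hab
  · rintro _ ⟨a, rfl⟩ _ ⟨b, rfl⟩ hab
    have hab' : a ≠ b := fun h => hab (h ▸ rfl)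
    exact adj_of_inter_neighborFinset_eq_of_inter_neighborFinset_eq hsparse hD rfl le_rfl
      (hP a) (hP b) (fun h => hab' (Subtype.ext h)) (hfD a) (hf2 a) (hw a) (hfD b) (hf2 b) (hw b)
      (hf.ne hab')
  · rintro u hu _ ⟨a, rfl⟩ -
    by_cases hua : u = a.1
    · subst hua
      exact (G.mem_neighborFinset _ _).mp
        (mem_inter.mp (eq_singleton_iff_unique_mem.mp (hw a)).1).1
    · exact adj_of_inter_neighborFinset_eq hsparse hD rfl le_rfl (hP a) (hfD a) (hf2 a) (hw a)
        hu hua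

theorem numSingletons_add_le_cliqueNum
    (hsparse : ∀ D', IsColoring G D' → D'.card + 1 = D.card →
      numSingletons D' + 2 < numSingletons D)
    (hD : IsColoring G D) {m : ℕ} (hm : m ≤ numSingletons D)
    (hL : ∀ v, {v} ∈ D → m ≤ (lonelyClasses G D v).card) :
    numSingletons D + m ≤ G.cliqueNum := by
  obtain ⟨P, hPD, rfl⟩ := exists_subset_card_eq ((card_filter_singleton_mem D).symm ▸ hm)
  have hP (a : P) : {a.1} ∈ D := (mem_filter.mp (hPD a.2)).2
  obtain ⟨f, hf, hfL⟩ := exists_injective_mem_of_card_le P (lonelyClasses G D)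
    fun x hx => hL x (hP ⟨x, hx⟩)
  simp only [lonelyClasses, mem_filter, card_eq_one] at hfL
  choose hfD hf2 w hw using hfL
  have hwf (a : P) : w a ∈ f a := (mem_inter.mp (eq_singleton_iff_unique_mem.mp (hw a)).1).2
  have hwinj : Function.Injective w := fun a b hab =>
    hf (hD.eq_of_mem (hfD a) (hfD b) (hwf a) (hab ▸ hwf b))
  have hdisj : Disjoint (univ.filter fun u => {u} ∈ D) (univ.image w) := by
    simp only [disjoint_right, mem_image, mem_univ, true_and, mem_filter]
    rintro _ ⟨a, rfl⟩ hwD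
    have h2 := hf2 a
    rw [← hD.eq_of_mem hwD (hfD a) (mem_singleton_self _) (hwf a), card_singleton] at h2
    omega
  have := (isClique_filter_singleton_mem_union_image hsparse hD hP hf hfD hf2 hw).card_le_cliqueNum
  rwa [card_union_of_disjoint hdisj, card_image_of_injective _ hwinj, card_univ,
    Fintype.card_coe, card_filter_singleton_mem] at this

end Clique

section Core

variable {G : SimpleGraph V} [DecidableRel G.Adj] {D : Finset (Finset V)}

theorem two_mul_numSingletons_le_of_forall
    (hfail : G.cliqueNum + G.maxDegree + 2 ≤ 2 * chi G) (hD : IsColoring G D)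
    (hprev : ∀ D', IsColoring G D' → D'.card + 1 = D.card →
      2 * numSingletons D' + 4 ≤ G.cliqueNum + 4 * (D.card - chi G)) :
    2 * numSingletons D ≤ G.cliqueNum + 4 * (D.card - chi G) := by
  by_contra! hbig
  have hsparse : ∀ D', IsColoring G D' → D'.card + 1 = D.card →
      numSingletons D' + 2 < numSingletons D := fun D' hD' hcard => by
    have := hprev D' hD' hcard
    omega
  -- `ω + 1 - |singletons|` lonely classes per singleton vertex would give a clique of order `ω + 1`
  have hL : ∀ v, {v} ∈ D → G.cliqueNum + 1 - numSingletons D ≤ (lonelyClasses G D v).card := by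
    intro v hv
    have := two_mul_card_le_degree_add hD hv
      (fun u hu huv => adj_of_singleton_mem hsparse hD rfl le_rfl hv hu huv.symm)
      (fun I hI hI2 => exists_adj_of_singleton_mem hsparse hD rfl le_rfl hv hI hI2)
    have := G.degree_le_maxDegree v
    have := chi_le_card hD
    omega
  have := numSingletons_add_le_cliqueNum hsparse hD (by omega) hL
  omega

theorem two_mul_numSingletons_le (hfail : G.cliqueNum + G.maxDegree + 2 ≤ 2 * chi G)
    {C : Finset (Finset V)} (hC : IsColoring G C) :
    2 * numSingletons C ≤ G.cliqueNum + 4 * (C.card - chi G) := by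
  refine two_mul_numSingletons_le_of_forall hfail hC fun D' hD' hcard => ?_
  have := two_mul_numSingletons_le hfail hD'
  have := chi_le_card hD'
  omega
termination_by C.card

end Core

section IndependentSet

variable {G : SimpleGraph V} {C : Finset (Finset V)} {A : Finset V}

theorem exists_card_eq_indepNum (G : SimpleGraph V) :
    ∃ A : Finset V, (∀ v ∈ A, ∀ w ∈ A, ¬ G.Adj v w) ∧ A.card = indepNum G :=
  Nat.sSup_mem (s := {n | ∃ A : Finset V, (∀ v ∈ A, ∀ w ∈ A, ¬ G.Adj v w) ∧ A.card = n})
    ⟨0, ∅, by simp, rfl⟩ ⟨Fintype.card V, by rintro _ ⟨s, -, rfl⟩; exact card_le_univ s⟩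

theorem IsColoring.two_mul_card_le (hC : IsColoring G C) (A : Finset V) :
    2 * C.card ≤ 2 * (C.filter (· ⊆ A)).card + (C.filter fun I => (I \ A).card = 1).card +
      (Fintype.card V - A.card) := by
  have hclass : ∀ I ∈ C, 2 ≤ 2 * (if I ⊆ A then 1 else 0) +
      (if (I \ A).card = 1 then 1 else 0) + (Aᶜ ∩ I).card := by
    intro I _
    rw [inter_comm, ← sdiff_eq_inter_compl]
    by_cases hIA : I ⊆ A
    · simp only [hIA, if_true]
      omega
    · have := (sdiff_nonempty.mpr hIA).card_pos
      split_ifs <;> omega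
  calc 2 * C.card = ∑ I ∈ C, 2 := by rw [sum_const, smul_eq_mul, mul_comm]
    _ ≤ _ := sum_le_sum hclass
    _ = _ := by
      simp only [sum_add_distrib, ← mul_sum, hC.sum_card_inter, ← card_filter, card_compl]

theorem IsColoring.card_filter_subset_le_one (hC : IsColoring G C) (hCopt : C.card = chi G)
    (hA : ∀ v ∈ A, ∀ w ∈ A, ¬ G.Adj v w) : (C.filter (· ⊆ A)).card ≤ 1 := by
  by_contra! h
  obtain ⟨I, hI, J, hJ, hIJ⟩ := one_lt_card.mp h
  rw [mem_filter] at hI hJ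
  obtain ⟨C', hC', hcard, -⟩ := hC.exists_merge hI.1 hJ.1 hIJ
    fun v hv w hw => hA v (union_subset hI.2 hJ.2 hv) w (union_subset hI.2 hJ.2 hw)
  have := chi_le_card hC'
  omega

end IndependentSet

theorem Finset.biUnion_insert_image_sdiff {α : Type*} [DecidableEq α] {R H : Finset (Finset α)}
    {A : Finset α} (hHR : H ⊆ R) (hR : ∀ I ∈ R, I ∉ H → I ⊆ A) :
    (insert (R.biUnion (· ∩ A)) (H.image (· \ A))).biUnion id = R.biUnion id := by
  ext x
  simp only [biUnion_insert, image_biUnion, id, mem_union, mem_biUnion, mem_inter, mem_sdiff]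
  constructor
  · rintro (⟨I, hI, hxI, -⟩ | ⟨J, hJ, hxJ, -⟩)
    exacts [⟨I, hI, hxI⟩, ⟨J, hHR hJ, hxJ⟩]
  · rintro ⟨I, hI, hxI⟩
    by_cases hxA : x ∈ A
    · exact Or.inl ⟨I, hI, hxI, hxA⟩
    · exact Or.inr ⟨I, not_not.mp fun hIH => hxA (hR I hI hIH hxI), hxI, hxA⟩

section Gather

variable {G : SimpleGraph V} {C H : Finset (Finset V)} {A : Finset V}

theorem IsColoring.injOn_sdiff (hC : IsColoring G C) (hH : H ⊆ C)
    (hne : ∀ J ∈ H, (J \ A).Nonempty) : Set.InjOn (· \ A) H := fun J hJ J' hJ' h => by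
  obtain ⟨x, hx⟩ := hne J hJ
  have h' : J \ A = J' \ A := h
  have hx' : x ∈ J' \ A := h' ▸ hx
  exact hC.eq_of_mem (hH hJ) (hH hJ') (mem_sdiff.mp hx).1 (mem_sdiff.mp hx').1

theorem IsColoring.exists_gather_of_nonempty (hC : IsColoring G C)
    (hA : ∀ v ∈ A, ∀ w ∈ A, ¬ G.Adj v w)
    (hB : ((C.filter (· ⊆ A) ∪ C.filter fun I => (I \ A).card = 1).biUnion (· ∩ A)).Nonempty) :
    ∃ C', IsColoring G C' ∧ C'.card + (C.filter (· ⊆ A)).card ≤ C.card + 1 ∧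
      (C.filter fun I => (I \ A).card = 1).card ≤ numSingletons C' := by
  set F := C.filter (· ⊆ A)
  set H := C.filter fun I => (I \ A).card = 1
  set B := (F ∪ H).biUnion (· ∩ A)
  have hBA : B ⊆ A := biUnion_subset.mpr fun _ _ => inter_subset_right
  have hHC : H ⊆ C := filter_subset _ _
  have hHne (J : Finset V) (hJ : J ∈ H) : (J \ A).Nonempty :=
    card_pos.mp (by rw [(mem_filter.mp hJ).2]; norm_num)
  -- `B` gathers the vertices of `A` in the classes of `F ∪ H`; each class of `H` leaves its
  -- single vertex outside `A` behind as a singleton class.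
  set R' := insert B (H.image (· \ A))
  have hne : ∀ K ∈ R', K.Nonempty := by
    simp only [R', mem_insert, mem_image]
    rintro K (rfl | ⟨J, hJ, rfl⟩)
    exacts [hB, hHne J hJ]
  have hind : ∀ K ∈ R', ∀ v ∈ K, ∀ w ∈ K, ¬ G.Adj v w := by
    simp only [R', mem_insert, mem_image]
    rintro K (rfl | ⟨J, hJ, rfl⟩) v hv w hw
    · exact hA v (hBA hv) w (hBA hw)
    · exact hC.2.2 J (hHC hJ) v (mem_sdiff.mp hv).1 w (mem_sdiff.mp hw).1
  have hdisj : ∀ K ∈ R', ∀ L ∈ R', K ≠ L → Disjoint K L := by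
    have hBJ (J : Finset V) : Disjoint B (J \ A) := disjoint_of_subset_left hBA disjoint_sdiff
    simp only [R', mem_insert, mem_image]
    rintro K (rfl | ⟨J, hJ, rfl⟩) L (rfl | ⟨J', hJ', rfl⟩) hKL
    · exact absurd rfl hKL
    · exact hBJ J'
    · exact (hBJ J).symm
    · exact (hC.disjoint (hHC hJ) (hHC hJ') fun h => hKL (h ▸ rfl)).mono sdiff_subset sdiff_subset
  have hcover : R'.biUnion id = (F ∪ H).biUnion id :=
    biUnion_insert_image_sdiff subset_union_right fun I hI hIH =>
      (mem_filter.mp ((mem_union.mp hI).resolve_right hIH)).2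
  obtain ⟨C', hC', hcard, -, hR'C', -⟩ :=
    hC.exists_replace (union_subset (filter_subset _ _) hHC) hne hind hdisj hcover
  refine ⟨C', hC', ?_, ?_⟩
  · have hR' : R'.card ≤ H.card + 1 := (card_insert_le _ _).trans
      (Nat.add_le_add_right card_image_le 1)
    have hFH : Disjoint F H := disjoint_filter.mpr fun I _ hIA h1 => by
      simp [sdiff_eq_empty_iff_subset.mpr hIA] at h1
    rw [card_union_of_disjoint hFH] at hcard
    omega
  · rw [← card_image_of_injOn (hC.injOn_sdiff hHC hHne)]
    refine card_le_card fun K hK => mem_filter.mpr ⟨hR'C' (mem_insert_of_mem hK), ?_⟩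
    obtain ⟨J, hJ, rfl⟩ := mem_image.mp hK
    exact (mem_filter.mp hJ).2

theorem IsColoring.exists_gather (hC : IsColoring G C) (hA : ∀ v ∈ A, ∀ w ∈ A, ¬ G.Adj v w) :
    ∃ C', IsColoring G C' ∧ C'.card + (C.filter (· ⊆ A)).card ≤ C.card + 1 ∧
      (C.filter fun I => (I \ A).card = 1).card ≤ numSingletons C' := by
  set F := C.filter (· ⊆ A)
  set H := C.filter fun I => (I \ A).card = 1
  obtain hB | hB := ((F ∪ H).biUnion (· ∩ A)).eq_empty_or_nonempty
  · have hsubB {I : Finset V} (hI : I ∈ F ∪ H) : I ∩ A = ∅ :=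
      subset_empty.mp (hB ▸ subset_biUnion_of_mem (· ∩ A) hI)
    have hF : F = ∅ := eq_empty_of_forall_notMem fun I hI => by
      obtain ⟨hIC, hIA⟩ := mem_filter.mp hI
      exact (hC.1 I hIC).ne_empty (inter_eq_left.mpr hIA ▸ hsubB (mem_union_left H hI))
    refine ⟨C, hC, by simp [hF], card_le_card fun J hJ => ?_⟩
    obtain ⟨hJC, hJ1⟩ := mem_filter.mp hJ
    have hJA := disjoint_iff_inter_eq_empty.mpr (hsubB (mem_union_right F hJ))
    exact mem_filter.mpr ⟨hJC, sdiff_eq_self_of_disjoint hJA ▸ hJ1⟩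
  · exact hC.exists_gather_of_nonempty hA hB

end Gather

theorem IsColoring.four_mul_card_filter_subset_add_le {G : SimpleGraph V} [DecidableRel G.Adj]
    {C : Finset (Finset V)} {A : Finset V} (hfail : G.cliqueNum + G.maxDegree + 2 ≤ 2 * chi G)
    (hC : IsColoring G C) (hCopt : C.card = chi G) (hA : ∀ v ∈ A, ∀ w ∈ A, ¬ G.Adj v w) :
    4 * (C.filter (· ⊆ A)).card + 2 * (C.filter fun I => (I \ A).card = 1).card ≤
      G.cliqueNum + 4 := by
  obtain ⟨C', hC', hcard, hH⟩ := hC.exists_gather hA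
  have := two_mul_numSingletons_le hfail hC'
  have := hC.card_filter_subset_le_one hCopt hA
  omega

theorem statement_7 (G : SimpleGraph V) [DecidableRel G.Adj] :
    (chi G : ℝ) ≤ ((G.cliqueNum : ℝ) + G.maxDegree + 1) / 2 ∨
    (chi G : ℝ) ≤ ((G.cliqueNum : ℝ) / 2 + Fintype.card V - indepNum G) / 2 + 1 := by
  by_cases hsmall : 2 * chi G ≤ G.cliqueNum + G.maxDegree + 1
  · left
    have : (2 * chi G : ℝ) ≤ G.cliqueNum + G.maxDegree + 1 := by exact_mod_cast hsmall
    linarith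
  · right
    obtain ⟨A, hA, hAcard⟩ := exists_card_eq_indepNum G
    obtain ⟨C, hC, hCopt⟩ := exists_isColoring_card_eq_chi G
    have hcount := hC.two_mul_card_le A
    have hkey := hC.four_mul_card_filter_subset_add_le (by omega) hCopt hA
    have hAV := card_le_univ A
    have : (4 * chi G + 2 * indepNum G : ℝ) ≤ G.cliqueNum + 2 * Fintype.card V + 4 := by
      rw [← hAcard]
      exact_mod_cast (by omega : 4 * chi G + 2 * A.card ≤ G.cliqueNum + 2 * Fintype.card V + 4)
    linarith
end
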